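/- Let n ≥ 1 be an integer and N = 2n+1. Then there exists an integer m such that det(T_{1,N}) = 2^{n+1−τ(N)} · m · N^{n/2}, i.e. the real number N^{−n/2}·det(T_{1,N}) is an integer divisible by 2^{n+1−τ(N)}. -/

import Mathlib

/-- For `N = 2n+1`, the tangent matrix `T_{m,N} = (tan^m(πij/N))_{1 ≤ i,j ≤ n}`. -/
noncomputable def tanMatrix (m n : ℕ) : Matrix (Fin n) (Fin n) ℝ :=
  Matrix.of fun i j =>
    Real.tan (Real.pi * ((i : ℕ) + 1) * ((j : ℕ) + 1) / (2 * n + 1)) ^ m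

/-!
Write `N = 2n+1`. For `Nθ ∈ πℤ` one has `tan θ = ∑_{x=1}^{N-1} (-1)^{x+1} sin 2xθ`; grouping the
terms of `tan (πab/N)` by the residue `bx mod N` and pairing each residue `r` with `-r` gives the
factorization `T_{1,N} = E · 2B` with `E = (sin (2πam/N))_{a,m}` and `B` the integer matrix of
signed counts of solutions of `bx ≡ m (mod N)`. The rows of `E` are orthogonal of squared length
`N/4`, so `2^n det E = ±N^{n/2}`.

Modulo 2 the column of `B` indexed by `b` just counts the solutions of `bx ≡ m`, so it only depends
on `b` up to a unit of `ZMod N`. Every `b` is a unit times a divisor of `N`, so each of the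
`n + 1 - τ(N)` columns whose index does not divide `N` is congruent mod 2 to a column whose index
does; subtracting these columns shows `2^{n+1-τ(N)} ∣ det B`.
-/

open Real Finset Matrix

theorem two_mul_cos_mul_sum_Ico_sin (θ : ℝ) (M : ℕ) :
    2 * cos θ * ∑ x ∈ Ico 1 (M + 1), (-1) ^ (x + 1) * sin (2 * x * θ) =
      sin θ + (-1) ^ (M + 1) * sin ((2 * M + 1) * θ) := by
  induction M with
  | zero => simp
  | succ M ih =>
    rw [sum_Ico_succ_top (by omega), mul_add, ih]
    push_cast
    have h₁ : (2 * ((M : ℝ) + 1) + 1) * θ = 2 * (M + 1) * θ + θ := by ring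
    have h₂ : (2 * (M : ℝ) + 1) * θ = 2 * (M + 1) * θ - θ := by ring
    rw [h₁, h₂, sin_add, sin_sub, pow_succ, pow_succ]
    ring

theorem tan_eq_sum_Ico_sin {n : ℕ} {θ : ℝ} {k : ℤ} (hθ : (2 * n + 1) * θ = k * π) :
    tan θ = ∑ x ∈ Ico 1 (2 * n + 1), (-1) ^ (x + 1) * sin (2 * x * θ) := by
  have key := two_mul_cos_mul_sum_Ico_sin θ (2 * n)
  have hsin : sin ((2 * ((2 * n : ℕ) : ℝ) + 1) * θ) = -sin θ := by
    rw [show (2 * ((2 * n : ℕ) : ℝ) + 1) * θ = k * (2 * π) - θ by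
      push_cast; linear_combination 2 * hθ]
    exact sin_int_mul_two_pi_sub θ k
  rw [hsin, (odd_two_mul_add_one n).neg_one_pow] at key
  have hcos : cos θ ≠ 0 := by
    intro h
    have : sin θ = 0 := by rw [h] at key; linarith
    simpa [h, this] using sin_sq_add_cos_sq θ
  rw [tan_eq_sin_div_cos, div_eq_iff hcos]
  linarith

theorem two_mul_sin_mul_sum_range_cos (θ : ℝ) (M : ℕ) :
    2 * sin θ * ∑ m ∈ range M, cos (2 * (m + 1) * θ) = sin ((2 * M + 1) * θ) - sin θ := by
  induction M with
  | zero => simp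
  | succ M ih =>
    rw [sum_range_succ, mul_add, ih]
    push_cast
    have h₁ : (2 * ((M : ℝ) + 1) + 1) * θ = 2 * (M + 1) * θ + θ := by ring
    have h₂ : (2 * (M : ℝ) + 1) * θ = 2 * (M + 1) * θ - θ := by ring
    rw [h₁, h₂, sin_add, sin_sub]
    ring

theorem sum_range_cos_two_pi_mul_div {n : ℕ} {k : ℤ} (hk : ¬ (2 * n + 1 : ℤ) ∣ k) :
    ∑ m ∈ range n, cos (2 * π * k * (m + 1) / (2 * n + 1)) = -1 / 2 := by
  set θ := π * k / (2 * n + 1)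
  have key := two_mul_sin_mul_sum_range_cos θ n
  rw [show (2 * (n : ℝ) + 1) * θ = k * π by simp only [θ]; field_simp, sin_int_mul_pi] at key
  have hsin : sin θ ≠ 0 := by
    rw [Ne, sin_eq_zero_iff]
    rintro ⟨l, hl⟩
    refine hk ⟨l, ?_⟩
    have : ((k : ℤ) : ℝ) = (2 * n + 1) * l := by
      simp only [θ] at hl; field_simp at hl; linarith
    exact_mod_cast this
  have hsum : ∑ m ∈ range n, cos (2 * π * k * (m + 1) / (2 * n + 1)) =
      ∑ m ∈ range n, cos (2 * (m + 1) * θ) :=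
    sum_congr rfl fun m _ => by simp only [θ]; ring_nf
  rw [hsum]
  apply mul_left_cancel₀ (mul_ne_zero two_ne_zero hsin)
  rw [key]
  ring

theorem sin_two_pi_mul_val_natCast_div (N a m : ℕ) [NeZero N] :
    sin (2 * π * a * (m : ZMod N).val / N) = sin (2 * π * a * m / N) := by
  have hN : (N : ℝ) ≠ 0 := Nat.cast_ne_zero.2 (NeZero.ne N)
  rw [ZMod.val_natCast]
  conv_rhs => rw [← Nat.mod_add_div m N]
  rw [show 2 * π * a * ((m % N + N * (m / N) : ℕ) : ℝ) / N =
      2 * π * a * (m % N : ℕ) / N + (a * (m / N) : ℕ) * (2 * π) by push_cast; field_simp,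
    sin_add_nat_mul_two_pi]

theorem sin_two_pi_mul_val_neg_div (N a : ℕ) [NeZero N] (y : ZMod N) :
    sin (2 * π * a * (-y).val / N) = -sin (2 * π * a * y.val / N) := by
  have hN : (N : ℝ) ≠ 0 := Nat.cast_ne_zero.2 (NeZero.ne N)
  rcases eq_or_ne y 0 with rfl | hy
  · simp
  rw [ZMod.neg_val, if_neg hy, Nat.cast_sub (ZMod.val_le y),
    show 2 * π * a * ((N : ℝ) - y.val) / N = a * (2 * π) - 2 * π * a * y.val / N by
      field_simp, sin_nat_mul_two_pi_sub]

theorem ZMod.sum_eq_add_sum_Ico {M : Type*} [AddCommMonoid M] {N : ℕ} [NeZero N]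
    (f : ZMod N → M) : ∑ y, f y = f 0 + ∑ x ∈ Ico 1 N, f x := by
  have hrange : ∑ y, f y = ∑ x ∈ range N, f x :=
    sum_nbij' ZMod.val (↑) (fun y _ => mem_range.2 (ZMod.val_lt y)) (fun _ _ => mem_univ _)
      (fun y _ => ZMod.natCast_zmod_val y) (fun x hx => ZMod.val_cast_of_lt (mem_range.1 hx))
      (fun y _ => by rw [ZMod.natCast_zmod_val])
  rw [hrange, range_eq_Ico, sum_eq_sum_Ico_succ_bot (NeZero.pos N), Nat.cast_zero]

theorem sum_Ico_one_reflect {M : Type*} [AddCommMonoid M] (N : ℕ) (f : ℕ → M) :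
    ∑ x ∈ Ico 1 N, f (N - x) = ∑ x ∈ Ico 1 N, f x := by
  rw [sum_Ico_reflect f 1 N.le_succ, show N + 1 - N = 1 by omega, Nat.add_sub_cancel]

theorem sum_Ico_eq_two_nsmul_of_symm {M : Type*} [AddCommMonoid M] (n : ℕ) (f : ℕ → M)
    (hf : ∀ x ∈ Ico 1 (n + 1), f (2 * n + 1 - x) = f x) :
    ∑ x ∈ Ico 1 (2 * n + 1), f x = 2 • ∑ x ∈ Ico 1 (n + 1), f x := by
  rw [← sum_Ico_consecutive f (by omega : 1 ≤ n + 1) (by omega : n + 1 ≤ 2 * n + 1), two_nsmul]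
  congr 1
  rw [← sum_congr rfl hf, sum_Ico_reflect f 1 (by omega : n + 1 ≤ 2 * n + 1 + 1),
    show 2 * n + 1 + 1 - (n + 1) = n + 1 by omega, Nat.add_sub_cancel]

theorem ZMod.sum_eq_two_nsmul_sum_range_of_even {M : Type*} [AddCommMonoid M] (n : ℕ)
    (f : ZMod (2 * n + 1) → M) (h0 : f 0 = 0) (hf : ∀ y, f (-y) = f y) :
    ∑ y, f y = 2 • ∑ x ∈ range n, f (x + 1) := by
  rw [ZMod.sum_eq_add_sum_Ico, h0, zero_add, sum_Ico_eq_two_nsmul_of_symm]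
  · rw [sum_Ico_eq_sum_range, Nat.add_sub_cancel]
    push_cast [add_comm]
    rfl
  · intro x hx
    rw [Nat.cast_sub (by have := (mem_Ico.1 hx).2; omega), ZMod.natCast_self, zero_sub, hf]

theorem neg_one_pow_sub_add_one {R : Type*} [Ring R] {n x : ℕ} (hx : x ≤ 2 * n + 1) :
    (-1 : R) ^ (2 * n + 1 - x + 1) = -(-1) ^ (x + 1) := by
  rcases Nat.even_or_odd x with h | h
  · rw [Nat.even_iff] at h
    rw [Even.neg_one_pow (Nat.even_iff.2 (by omega)), Odd.neg_one_pow (Nat.odd_iff.2 (by omega)),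
      neg_neg]
  · rw [Nat.odd_iff] at h
    rw [Odd.neg_one_pow (Nat.odd_iff.2 (by omega)), Even.neg_one_pow (Nat.even_iff.2 (by omega))]

def signedCount (N b : ℕ) (r : ZMod N) : ℤ :=
  ∑ x ∈ Ico 1 N, if (b * x : ZMod N) = r then (-1) ^ (x + 1) else 0

theorem signedCount_neg (n b : ℕ) (r : ZMod (2 * n + 1)) :
    signedCount (2 * n + 1) b (-r) = -signedCount (2 * n + 1) b r := by
  unfold signedCount
  rw [← sum_Ico_one_reflect, ← sum_neg_distrib]
  refine sum_congr rfl fun x hx => ?_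
  have hxN : x ≤ 2 * n + 1 := (mem_Ico.1 hx).2.le
  simp only [Nat.cast_sub hxN, ZMod.natCast_self, zero_sub, mul_neg, neg_inj,
    neg_one_pow_sub_add_one hxN, apply_ite Neg.neg, neg_zero]

theorem signedCount_cast_zmod_two (N b : ℕ) (r : ZMod N) :
    (signedCount N b r : ZMod 2) = #{x ∈ Ico 1 N | (b : ZMod N) * (x : ℕ) = r} := by
  simp only [signedCount, card_filter, Int.cast_sum, Nat.cast_sum, apply_ite Int.cast]
  push_cast
  simp [show (-1 : ZMod 2) = 1 from rfl]

theorem card_filter_mul_eq_of_eq_unit_mul {N b d : ℕ} [NeZero N] {u : ZMod N} (hu : IsUnit u)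
    (hb : (b : ZMod N) = u * d) (r : ZMod N) :
    #{x ∈ Ico 1 N | (b : ZMod N) * (x : ℕ) = r} = #{x ∈ Ico 1 N | (d : ZMod N) * (x : ℕ) = r} := by
  have key : ∑ y : ZMod N, (if (b : ZMod N) * y = r then 1 else 0) =
      ∑ y : ZMod N, (if (d : ZMod N) * y = r then 1 else 0 : ℕ) :=
    Fintype.sum_equiv (Units.mulLeft hu.unit) _ _ fun y => by simp [hb, mul_assoc, mul_left_comm]
  rw [ZMod.sum_eq_add_sum_Ico, ZMod.sum_eq_add_sum_Ico, mul_zero, mul_zero, add_right_inj,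
    ← card_filter, ← card_filter] at key
  exact key

theorem sum_neg_one_pow_mul_eq_two_mul_sum_signedCount {R : Type*} [CommRing R] (n b : ℕ)
    (φ : ZMod (2 * n + 1) → R) (hφ : ∀ y, φ (-y) = -φ y) :
    ∑ x ∈ Ico 1 (2 * n + 1), (-1) ^ (x + 1) * φ (b * x) =
      2 * ∑ r ∈ range n, φ (r + 1) * signedCount (2 * n + 1) b (r + 1) := by
  have hfiber : ∑ x ∈ Ico 1 (2 * n + 1), (-1) ^ (x + 1) * φ (b * x) =
      ∑ y, φ y * signedCount (2 * n + 1) b y := by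
    simp only [signedCount, Int.cast_sum, mul_sum]
    rw [sum_comm]
    refine sum_congr rfl fun x _ => ?_
    simp [apply_ite, mul_comm]
  have hzero : signedCount (2 * n + 1) b 0 = 0 := by
    have := signedCount_neg n b 0
    rw [neg_zero] at this
    omega
  rw [hfiber, ZMod.sum_eq_two_nsmul_sum_range_of_even, two_nsmul, ← two_mul]
  · simp [hzero]
  · intro y
    rw [hφ, signedCount_neg]
    push_cast
    ring

theorem Matrix.pow_card_dvd_det_of_forall_exists_sub_dvd {R ι : Type*} [CommRing R] [Fintype ι]
    [DecidableEq ι] (p : R) (s : Finset ι) (M : Matrix ι ι R)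
    (h : ∀ j ∈ s, ∃ k ∉ s, ∀ i, p ∣ M i j - M i k) : p ^ s.card ∣ M.det := by
  induction s using Finset.induction_on generalizing M with
  | empty => simp
  | insert a t ha ih =>
    obtain ⟨k, hk, hcol⟩ := h a (mem_insert_self a t)
    have hka : k ≠ a := fun hka => hk (hka ▸ mem_insert_self a t)
    choose c hc using hcol
    have hM : M = M.updateCol a ((fun i => M i k) + p • c) := by
      ext i j
      rcases eq_or_ne j a with rfl | hj
      · simp [← hc]
      · simp [hj]
    have hdet : M.det = p * (M.updateCol a c).det := by
      conv_lhs => rw [hM]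
      rw [det_updateCol_add, det_updateCol_smul,
        det_zero_of_column_eq hka.symm (fun i => by simp [hka]), zero_add]
    rw [hdet, card_insert_of_notMem ha, pow_succ']
    refine mul_dvd_mul_left p (ih _ fun j hj => ?_)
    obtain ⟨k', hk', hcol'⟩ := h j (mem_insert_of_mem hj)
    have hja : j ≠ a := fun hja => ha (hja ▸ hj)
    have hk'a : k' ≠ a := fun hk'a => hk' (hk'a ▸ mem_insert_self a t)
    exact ⟨k', fun hk't => hk' (mem_insert_of_mem hk't),
      fun i => by simpa [hja, hk'a] using hcol' i⟩

theorem le_of_dvd_two_mul_add_one {n d : ℕ} (hd : d ∣ 2 * n + 1) (hne : d ≠ 2 * n + 1) :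
    d ≤ n := by
  obtain ⟨k, hk⟩ := hd
  have hk3 : 3 ≤ k := by
    rcases k with _ | _ | _ | k <;> omega
  nlinarith

theorem card_filter_not_dvd (n : ℕ) :
    #{j : Fin n | ¬((j : ℕ) + 1) ∣ 2 * n + 1} = n + 1 - (2 * n + 1).divisors.card := by
  have hproper : #{j : Fin n | ((j : ℕ) + 1) ∣ 2 * n + 1} = (2 * n + 1).properDivisors.card := by
    refine card_bij (fun j _ => (j : ℕ) + 1) (fun j hj => ?_) (fun j _ j' _ h => ?_) fun d hd => ?_
    · simp only [mem_filter, mem_univ, true_and] at hj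
      exact Nat.mem_properDivisors.2 ⟨hj, by omega⟩
    · exact Fin.ext (by simpa using h)
    · obtain ⟨hdvd, hlt⟩ := Nat.mem_properDivisors.1 hd
      have hd0 : d ≠ 0 := by rintro rfl; simp at hdvd
      have hdn := le_of_dvd_two_mul_add_one hdvd hlt.ne
      exact ⟨⟨d - 1, by omega⟩, by simpa [show d - 1 + 1 = d by omega] using hdvd,
        by dsimp only; omega⟩
  have hdiv := card_cons (Nat.self_notMem_properDivisors (n := 2 * n + 1))
  rw [Nat.cons_self_properDivisors (by omega)] at hdiv
  have hsplit := card_filter_add_card_filter_not (s := (univ : Finset (Fin n)))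
    (fun j : Fin n => ((j : ℕ) + 1) ∣ 2 * n + 1)
  rw [card_univ, Fintype.card_fin, hproper] at hsplit
  omega

def signedCountMatrix (n : ℕ) : Matrix (Fin n) (Fin n) ℤ :=
  of fun r j => signedCount (2 * n + 1) ((j : ℕ) + 1) ((r : ℕ) + 1)

theorem exists_dvd_col_sub_signedCountMatrix (n : ℕ) (j : Fin n) :
    ∃ k : Fin n, ((k : ℕ) + 1) ∣ 2 * n + 1 ∧
      ∀ r, (2 : ℤ) ∣ signedCountMatrix n r j - signedCountMatrix n r k := by
  obtain ⟨d, hdN, u, hu, hb⟩ := ZMod.eq_unit_mul_divisor (((j : ℕ) + 1 : ℕ) : ZMod (2 * n + 1))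
  have hd0 : d ≠ 0 := by rintro rfl; simp at hdN
  have hdN' : d ≠ 2 * n + 1 := by
    rintro rfl
    rw [ZMod.natCast_self, mul_zero, ZMod.natCast_eq_zero_iff] at hb
    have := Nat.le_of_dvd (by omega) hb
    omega
  have hdn := le_of_dvd_two_mul_add_one hdN hdN'
  refine ⟨⟨d - 1, by omega⟩, by simpa [show d - 1 + 1 = d by omega] using hdN, fun r => ?_⟩
  apply (ZMod.intCast_eq_intCast_iff_dvd_sub _ _ 2).1
  simp only [signedCountMatrix, of_apply, signedCount_cast_zmod_two]
  rw [card_filter_mul_eq_of_eq_unit_mul hu hb]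
  simp [show d - 1 + 1 = d by omega]

theorem two_pow_dvd_det_signedCountMatrix (n : ℕ) :
    (2 : ℤ) ^ (n + 1 - (2 * n + 1).divisors.card) ∣ (signedCountMatrix n).det := by
  rw [← card_filter_not_dvd]
  refine pow_card_dvd_det_of_forall_exists_sub_dvd _ _ _ fun j _ => ?_
  obtain ⟨k, hk, hcol⟩ := exists_dvd_col_sub_signedCountMatrix n j
  exact ⟨k, by simpa using hk, hcol⟩

noncomputable def sinMatrix (n : ℕ) : Matrix (Fin n) (Fin n) ℝ :=
  of fun a m => sin (2 * π * ((a : ℕ) + 1) * ((m : ℕ) + 1) / (2 * n + 1))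

theorem sinMatrix_mul_transpose (n : ℕ) :
    sinMatrix n * (sinMatrix n)ᵀ = ((2 * n + 1) / 4 : ℝ) • (1 : Matrix (Fin n) (Fin n) ℝ) := by
  set C : ℤ → ℝ := fun k => ∑ m ∈ range n, cos (2 * π * k * (m + 1) / (2 * n + 1))
  have hC : ∀ k : ℤ, k ≠ 0 → -(2 * n + 1) < k → k < 2 * n + 1 → C k = -1 / 2 :=
    fun k hk0 hlo hhi => sum_range_cos_two_pi_mul_div fun hdvd =>
      hk0 (Int.eq_zero_of_abs_lt_dvd hdvd (abs_lt.2 ⟨hlo, hhi⟩))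
  ext i j
  have hi := i.isLt
  have hj := j.isLt
  have hprod :
      (sinMatrix n * (sinMatrix n)ᵀ) i j = (C ((i : ℤ) - j) - C ((i : ℤ) + j + 2)) / 2 := by
    have h : ∀ x y : ℝ, sin x * sin y = (cos (x - y) - cos (x + y)) / 2 := fun x y => by
      rw [cos_sub, cos_add]; ring
    simp only [mul_apply, transpose_apply, sinMatrix, of_apply, C, ← sum_sub_distrib, sum_div]
    rw [Fin.sum_univ_eq_sum_range (fun m => sin (2 * π * ((i : ℕ) + 1) * (m + 1) / (2 * n + 1)) *
      sin (2 * π * ((j : ℕ) + 1) * (m + 1) / (2 * n + 1)))]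
    refine sum_congr rfl fun m _ => ?_
    rw [h]
    congr 3 <;> push_cast <;> ring
  have hsum : C ((i : ℤ) + j + 2) = -1 / 2 := hC _ (by omega) (by omega) (by omega)
  rw [hprod, hsum, Matrix.smul_apply, one_apply, smul_eq_mul]
  rcases eq_or_ne i j with rfl | hij
  · have hC0 : C 0 = n := by simp [C]
    rw [sub_self, hC0, if_pos rfl]
    ring
  · rw [hC _ (by omega) (by omega) (by omega), if_neg hij]
    ring

theorem sq_det_sinMatrix (n : ℕ) : (sinMatrix n).det ^ 2 = ((2 * n + 1) / 4 : ℝ) ^ n := by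
  simpa [sq, det_transpose, det_smul] using congrArg det (sinMatrix_mul_transpose n)

theorem tanMatrix_one_eq (n : ℕ) :
    tanMatrix 1 n = sinMatrix n * (2 : ℝ) • (signedCountMatrix n).map (Int.cast : ℤ → ℝ) := by
  ext i j
  set a := (i : ℕ) + 1
  set b := (j : ℕ) + 1
  let φ : ZMod (2 * n + 1) → ℝ := fun y => sin (2 * π * a * y.val / (2 * n + 1 : ℕ))
  have hφ : ∀ y, φ (-y) = -φ y := sin_two_pi_mul_val_neg_div _ a
  have htan : tanMatrix 1 n i j = ∑ x ∈ Ico 1 (2 * n + 1), (-1) ^ (x + 1) * φ (b * x) := by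
    rw [tanMatrix, of_apply, pow_one,
      tan_eq_sum_Ico_sin (n := n) (k := a * b) (by push_cast [a, b]; field_simp)]
    refine sum_congr rfl fun x _ => ?_
    simp only [φ]
    rw [← Nat.cast_mul, sin_two_pi_mul_val_natCast_div]
    push_cast [a, b]
    ring_nf
  rw [htan, sum_neg_one_pow_mul_eq_two_mul_sum_signedCount n b φ hφ, mul_apply,
    ← Fin.sum_univ_eq_sum_range, mul_sum]
  refine sum_congr rfl fun r _ => ?_
  simp only [φ, sinMatrix, signedCountMatrix, of_apply, Matrix.smul_apply, map_apply, smul_eq_mul]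
  rw [← Nat.cast_succ, ZMod.val_cast_of_lt (by omega)]
  push_cast [a, b]
  ring

theorem det_tanMatrix_one_general (n : ℕ) :
    ∃ m : ℤ, (tanMatrix 1 n).det =
      2 ^ (n + 1 - (2 * n + 1).divisors.card) * (m : ℝ) *
        Real.sqrt (2 * n + 1) ^ n := by
  obtain ⟨c, hc⟩ := two_pow_dvd_det_signedCountMatrix n
  have hdet : (tanMatrix 1 n).det = 2 ^ n * (sinMatrix n).det * (signedCountMatrix n).det := by
    rw [tanMatrix_one_eq, det_mul, det_smul, ← Int.cast_det, Fintype.card_fin]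
    ring
  have hsq : (2 ^ n * (sinMatrix n).det) ^ 2 = (√(2 * n + 1) ^ n) ^ 2 := by
    rw [mul_pow, sq_det_sinMatrix, ← pow_mul, ← pow_mul, mul_comm n, pow_mul, pow_mul,
      sq_sqrt (by positivity), ← mul_pow]
    ring
  rcases sq_eq_sq_iff_eq_or_eq_neg.1 hsq with h | h
  · exact ⟨c, by rw [hdet, h, hc]; push_cast; ring⟩
  · exact ⟨-c, by rw [hdet, h, hc]; push_cast; ring⟩

/-- For `n ≥ 1` and `N = 2n+1`, the real number `N^{−n/2}·det(T_{1,N})` is an integer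
divisible by `2^{n+1−τ(N)}`, where `τ(N)` is the number of positive divisors of `N`:
there is an integer `m` with `det(T_{1,N}) = 2^{n+1−τ(N)} · m · N^{n/2}`. -/
theorem det_tanMatrix_one (n : ℕ) (hn : 1 ≤ n) :
    ∃ m : ℤ, (tanMatrix 1 n).det =
      2 ^ (n + 1 - (2 * n + 1).divisors.card) * (m : ℝ) *
        Real.sqrt (2 * n + 1) ^ n :=
  det_tanMatrix_one_general n
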